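/- arXiv:1703.07658 — 4 statements merged into one kernel-verified Lean document; each statement's English description precedes it below -/
import Mathlib

section
/- For all real x with 0 < x ≤ π, the inequality |(sin x / x) · (3 / (2 + cos x))| ≤ 1 holds; i.e., every discrete wave of the P1–P1 scheme travels no faster than the analytic wave speed. -/
/-!
Clearing the positive denominators, the claim is `3 |sin x| ≤ x (2 + cos x)`. On `[0, π]` the
difference `g x = x (2 + cos x) - 3 sin x` satisfies `g 0 = g' 0 = g'' 0 = 0` and
`g''' x = x sin x ≥ 0`, so three monotonicity steps give `g ≥ 0`; beyond `π > 3` the bound is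
trivial.
-/

open Real Set

lemma le_of_hasDerivAt_nonneg {f f' : ℝ → ℝ} {a b x : ℝ}
    (hf : ∀ y ∈ Icc a b, HasDerivAt f (f' y) y) (hf' : ∀ y ∈ Icc a b, 0 ≤ f' y)
    (hx : x ∈ Icc a b) : f a ≤ f x := by
  have hmono : MonotoneOn f (Icc a b) :=
    monotoneOn_of_hasDerivWithinAt_nonneg (convex_Icc a b)
      (fun y hy => (hf y hy).continuousAt.continuousWithinAt)
      (fun y hy => (hf y (interior_subset hy)).hasDerivWithinAt)
      (fun y hy => hf' y (interior_subset hy))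
  exact hmono (left_mem_Icc.2 (hx.1.trans hx.2)) hx hx.1

lemma mul_cos_le_sin {x : ℝ} (hx : x ∈ Icc 0 π) : x * cos x ≤ sin x := by
  have hderiv : ∀ y ∈ Icc 0 π, HasDerivAt (fun y => sin y - y * cos y) (y * sin y) y := by
    intro y _
    exact ((hasDerivAt_sin y).sub ((hasDerivAt_id' y).mul (hasDerivAt_cos y))).congr_deriv
      (by ring)
  have := le_of_hasDerivAt_nonneg hderiv
    (fun y hy => mul_nonneg hy.1 (sin_nonneg_of_nonneg_of_le_pi hy.1 hy.2)) hx
  simp only [sin_zero, zero_mul, sub_zero] at this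
  linarith

lemma mul_sin_le_two_sub_two_mul_cos {x : ℝ} (hx : x ∈ Icc 0 π) :
    x * sin x ≤ 2 - 2 * cos x := by
  have hderiv : ∀ y ∈ Icc 0 π,
      HasDerivAt (fun y => 2 - 2 * cos y - y * sin y) (sin y - y * cos y) y := by
    intro y _
    exact (((hasDerivAt_cos y).const_mul 2).const_sub 2 |>.sub
      ((hasDerivAt_id' y).mul (hasDerivAt_sin y))).congr_deriv (by ring)
  have := le_of_hasDerivAt_nonneg hderiv (fun y hy => sub_nonneg.2 (mul_cos_le_sin hy)) hx
  simp only [cos_zero, sin_zero, mul_zero, mul_one, sub_self] at this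
  linarith

lemma three_mul_abs_sin_le_mul_two_add_cos {x : ℝ} (hx : 0 ≤ x) :
    3 * |sin x| ≤ x * (2 + cos x) := by
  rcases le_or_gt x π with hxπ | hπx
  · have hderiv : ∀ y ∈ Icc 0 π, HasDerivAt (fun y => y * (2 + cos y) - 3 * sin y)
        (2 - 2 * cos y - y * sin y) y := by
      intro y _
      exact (((hasDerivAt_id' y).mul ((hasDerivAt_cos y).const_add 2)).sub
        ((hasDerivAt_sin y).const_mul 3)).congr_deriv (by ring)
    have := le_of_hasDerivAt_nonneg hderiv
      (fun y hy => sub_nonneg.2 (mul_sin_le_two_sub_two_mul_cos hy)) ⟨hx, hxπ⟩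
    simp only [sin_zero, zero_mul, mul_zero, sub_zero] at this
    rw [abs_of_nonneg (sin_nonneg_of_nonneg_of_le_pi hx hxπ)]
    linarith
  · nlinarith [abs_sin_le_one x, neg_one_le_cos x, pi_gt_three]

theorem stmt_4_general (x : ℝ) (hx0 : 0 < x) :
    |(Real.sin x / x) * (3 / (2 + Real.cos x))| ≤ 1 := by
  have hdenom : 0 < 2 + cos x := by linarith [neg_one_le_cos x]
  rw [div_mul_div_comm, abs_div, abs_mul, abs_of_pos (mul_pos hx0 hdenom),
    div_le_one (mul_pos hx0 hdenom), abs_of_pos (three_pos : (0:ℝ) < 3), mul_comm]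
  exact three_mul_abs_sin_le_mul_two_add_cos hx0.le

theorem stmt_4 (x : ℝ) (hx0 : 0 < x) (hxpi : x ≤ Real.pi) :
    |(Real.sin x / x) * (3 / (2 + Real.cos x))| ≤ 1 :=
  stmt_4_general x hx0
end

section
/- For g, H, Δx > 0 and ω, x real with x ∈ (0, π), the 4×4 matrix M with rows [iω, i(2g/Δx)sin(x/2), 0, 0], [0, 0, i(2H/Δx)sin(x/2), iω], [−cos(x/2), 0, (2 + cos x)/3, 0], [0, (2 + cos x)/3, 0, −cos(x/2)] has det M = 0 if and only if ω² = gH·(4/Δx²)·sin²(x/2)·(3cos(x/2)/(2 + cos x))². -/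
open Complex

theorem Matrix.det_fin_four_of_sparse {R : Type*} [CommRing R] (a b c d p q : R) :
    !![a, b, 0, 0; 0, 0, c, d; p, 0, q, 0; 0, q, 0, p].det = b * c * p ^ 2 - a * d * q ^ 2 := by
  simp [Matrix.det_succ_row_zero, Fin.sum_univ_succ, show (Fin.succAbove 1 2 : Fin 4) = 3 from rfl]
  ring

theorem Real.two_add_cos_ne_zero (x : ℝ) : 2 + Real.cos x ≠ 0 := by
  linarith [Real.neg_one_le_cos x]

theorem stmt_9_general (g H Δx : ℝ)
    (ω x : ℝ) :
    Matrix.det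
      !![Complex.I * (ω : ℂ), Complex.I * ((2 * g / Δx : ℝ) : ℂ) * ((Real.sin (x / 2) : ℝ) : ℂ), 0, 0;
         0, 0, Complex.I * ((2 * H / Δx : ℝ) : ℂ) * ((Real.sin (x / 2) : ℝ) : ℂ), Complex.I * (ω : ℂ);
         -((Real.cos (x / 2) : ℝ) : ℂ), 0, (((2 + Real.cos x) / 3 : ℝ) : ℂ), 0;
         0, (((2 + Real.cos x) / 3 : ℝ) : ℂ), 0, -((Real.cos (x / 2) : ℝ) : ℂ)] = 0
      ↔ ω ^ 2 = g * H * (4 / Δx ^ 2) * Real.sin (x / 2) ^ 2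
          * (3 * Real.cos (x / 2) / (2 + Real.cos x)) ^ 2 := by
  set s := Real.sin (x / 2)
  set c := Real.cos (x / 2)
  set q := (2 + Real.cos x) / 3
  have hq : q ^ 2 ≠ 0 := pow_ne_zero _ (div_ne_zero (Real.two_add_cos_ne_zero x) three_ne_zero)
  have hrhs : g * H * (4 / Δx ^ 2) * s ^ 2 * (3 * c / (2 + Real.cos x)) ^ 2
      = 4 * g * H / Δx ^ 2 * s ^ 2 * c ^ 2 / q ^ 2 := by
    simp only [q]
    field_simp
  rw [Matrix.det_fin_four_of_sparse, hrhs, eq_div_iff hq]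
  -- since `I ^ 2 = -1`, the determinant is the real number `ω² q² - (2g/Δx)(2H/Δx) s² c²`
  refine Iff.trans (Eq.congr_left ?_) (Complex.ofReal_eq_zero.trans sub_eq_zero)
  push_cast
  linear_combination (4 * (g : ℂ) * H / Δx ^ 2 * s ^ 2 * c ^ 2 - ω ^ 2 * q ^ 2) * Complex.I_sq

theorem stmt_9 (g H Δx : ℝ) (hg : 0 < g) (hH : 0 < H) (hΔx : 0 < Δx)
    (ω x : ℝ) (hx : x ∈ Set.Ioo (0 : ℝ) Real.pi) :
    Matrix.det
      !![Complex.I * (ω : ℂ), Complex.I * ((2 * g / Δx : ℝ) : ℂ) * ((Real.sin (x / 2) : ℝ) : ℂ), 0, 0;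
         0, 0, Complex.I * ((2 * H / Δx : ℝ) : ℂ) * ((Real.sin (x / 2) : ℝ) : ℂ), Complex.I * (ω : ℂ);
         -((Real.cos (x / 2) : ℝ) : ℂ), 0, (((2 + Real.cos x) / 3 : ℝ) : ℂ), 0;
         0, (((2 + Real.cos x) / 3 : ℝ) : ℂ), 0, -((Real.cos (x / 2) : ℝ) : ℂ)] = 0
      ↔ ω ^ 2 = g * H * (4 / Δx ^ 2) * Real.sin (x / 2) ^ 2
          * (3 * Real.cos (x / 2) / (2 + Real.cos x)) ^ 2 :=
  stmt_9_general g H Δx ω x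
end

section
/- For g, H, Δx > 0 and ω real, x ∈ (0, π), the 4×4 matrix M with rows [iω, i(2g/Δx)sin(x/2), 0, 0], [0, 0, i(2H/Δx)sin(x/2), iω], [1, 0, −cos(x/2), 0], [0, −cos(x/2), 0, 1] has det M = 0 if and only if ω² = gH·(4/Δx²)·tan²(x/2). -/
/-! Expanding along the first row, the determinant is the real number
`ω² cos²(x/2) - (2g/Δx)(2H/Δx) sin²(x/2)`; as `cos(x/2) ≠ 0` on `(0, π)`, dividing by `cos²(x/2)`
gives the dispersion relation. -/

open Complex

theorem det_gp0_symbol {R : Type*} [CommRing R] (p q r s c : R) :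
    Matrix.det !![p, q, 0, 0; 0, 0, r, s; 1, 0, -c, 0; 0, -c, 0, 1] = q * r - p * s * c ^ 2 := by
  rw [Matrix.det_succ_row_zero, Fin.sum_univ_four]
  simp [Matrix.det_fin_three, Fin.succAbove]
  ring

theorem Real.sq_mul_cos_sq_sub_eq_zero_iff {θ : ℝ} (hθ : Real.cos θ ≠ 0) (ω k : ℝ) :
    ω ^ 2 * Real.cos θ ^ 2 - k * Real.sin θ ^ 2 = 0 ↔ ω ^ 2 = k * Real.tan θ ^ 2 := by
  rw [Real.tan_eq_sin_div_cos, sub_eq_zero]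
  field_simp

theorem stmt_10_general (g H Δx : ℝ)
    (ω x : ℝ) (hx : x ∈ Set.Ioo (0 : ℝ) Real.pi) :
    Matrix.det
      !![Complex.I * (ω : ℂ), Complex.I * ((2 * g / Δx : ℝ) : ℂ) * ((Real.sin (x / 2) : ℝ) : ℂ), 0, 0;
         0, 0, Complex.I * ((2 * H / Δx : ℝ) : ℂ) * ((Real.sin (x / 2) : ℝ) : ℂ), Complex.I * (ω : ℂ);
         1, 0, -((Real.cos (x / 2) : ℝ) : ℂ), 0;
         0, -((Real.cos (x / 2) : ℝ) : ℂ), 0, 1] = 0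
      ↔ ω ^ 2 = g * H * (4 / Δx ^ 2) * Real.tan (x / 2) ^ 2 := by
  have hcos : Real.cos (x / 2) ≠ 0 :=
    (Real.cos_pos_of_mem_Ioo ⟨by linarith [hx.1, Real.pi_pos], by linarith [hx.2]⟩).ne'
  rw [det_gp0_symbol]
  have hdet_real : I * ((2 * g / Δx : ℝ) : ℂ) * (Real.sin (x / 2) : ℂ)
        * (I * ((2 * H / Δx : ℝ) : ℂ) * (Real.sin (x / 2) : ℂ))
        - I * ω * (I * ω) * (Real.cos (x / 2) : ℂ) ^ 2
      = ((ω ^ 2 * Real.cos (x / 2) ^ 2 - (2 * g / Δx) * (2 * H / Δx) * Real.sin (x / 2) ^ 2 : ℝ) : ℂ) := by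
    simp only [ofReal_sub, ofReal_mul, ofReal_pow]
    linear_combination (((2 * g / Δx : ℝ) : ℂ) * ((2 * H / Δx : ℝ) : ℂ) * (Real.sin (x / 2) : ℂ) ^ 2
      - ω ^ 2 * (Real.cos (x / 2) : ℂ) ^ 2) * I_sq
  rw [hdet_real, ofReal_eq_zero, Real.sq_mul_cos_sq_sub_eq_zero_iff hcos]
  rw [show g * H * (4 / Δx ^ 2) = 2 * g / Δx * (2 * H / Δx) by ring]

theorem stmt_10 (g H Δx : ℝ) (hg : 0 < g) (hH : 0 < H) (hΔx : 0 < Δx)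
    (ω x : ℝ) (hx : x ∈ Set.Ioo (0 : ℝ) Real.pi) :
    Matrix.det
      !![Complex.I * (ω : ℂ), Complex.I * ((2 * g / Δx : ℝ) : ℂ) * ((Real.sin (x / 2) : ℝ) : ℂ), 0, 0;
         0, 0, Complex.I * ((2 * H / Δx : ℝ) : ℂ) * ((Real.sin (x / 2) : ℝ) : ℂ), Complex.I * (ω : ℂ);
         1, 0, -((Real.cos (x / 2) : ℝ) : ℂ), 0;
         0, -((Real.cos (x / 2) : ℝ) : ℂ), 0, 1] = 0
      ↔ ω ^ 2 = g * H * (4 / Δx ^ 2) * Real.tan (x / 2) ^ 2 :=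
  stmt_10_general g H Δx ω x hx
end

section
/- For every x ∈ (0, π), the GP0–GP0 normalized phase speed strictly dominates the P1–P0 one: tan(x/2)/(x/2) > (sin(x/2)/(x/2)) · sqrt(3/(2 + cos x)). -/
open Real

lemma two_add_cos_eq (x : ℝ) : 2 + cos x = 1 + 2 * cos (x / 2) ^ 2 := by
  rw [cos_sq, mul_div_cancel₀ x two_ne_zero]
  ring

/-- After the half-angle substitution `c = cos (x / 2)` this is `3 c² < 1 + 2 c²`, i.e. `c² < 1`. -/
lemma three_div_two_add_cos_lt_inv_cos_half_sq {x : ℝ} (hc : cos (x / 2) ≠ 0)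
    (hs : sin (x / 2) ≠ 0) : 3 / (2 + cos x) < (cos (x / 2) ^ 2)⁻¹ := by
  have hc_sq_lt_one : cos (x / 2) ^ 2 < 1 := by
    nlinarith [sin_sq_add_cos_sq (x / 2), sq_pos_of_ne_zero hs]
  have hc_sq_pos : 0 < cos (x / 2) ^ 2 := by positivity
  rw [two_add_cos_eq, ← one_div, div_lt_div_iff₀ (by positivity) hc_sq_pos]
  linarith

lemma sqrt_three_div_two_add_cos_lt_inv_cos_half {x : ℝ} (hc : 0 < cos (x / 2))
    (hs : sin (x / 2) ≠ 0) : √(3 / (2 + cos x)) < (cos (x / 2))⁻¹ := by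
  calc √(3 / (2 + cos x)) < √((cos (x / 2) ^ 2)⁻¹) :=
        sqrt_lt_sqrt (by rw [two_add_cos_eq]; positivity)
          (three_div_two_add_cos_lt_inv_cos_half_sq hc.ne' hs)
    _ = (cos (x / 2))⁻¹ := by rw [sqrt_inv, sqrt_sq hc.le]

theorem stmt_18 (x : ℝ) (hx : x ∈ Set.Ioo (0 : ℝ) Real.pi) :
    (Real.sin (x / 2) / (x / 2)) * Real.sqrt (3 / (2 + Real.cos x))
      < Real.tan (x / 2) / (x / 2) := by
  obtain ⟨hx0, hxpi⟩ := hx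
  have hs : 0 < sin (x / 2) := sin_pos_of_pos_of_lt_pi (by linarith) (by linarith)
  have hc : 0 < cos (x / 2) := cos_pos_of_mem_Ioo ⟨by linarith, by linarith⟩
  have htan : tan (x / 2) / (x / 2) = sin (x / 2) / (x / 2) * (cos (x / 2))⁻¹ := by
    rw [tan_eq_sin_div_cos]
    ring
  rw [htan]
  exact mul_lt_mul_of_pos_left (sqrt_three_div_two_add_cos_lt_inv_cos_half hc hs.ne')
    (by positivity)
end
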